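/- arXiv:1906.09801 — 2 statements merged into one kernel-verified Lean document; each statement's English description precedes it below -/
import Mathlib

section
/- For every h ∈ {1,…,k} and every p ∈ ℕ, the companion matrix satisfies the identity (−1)^{k−h} ∂(A(s)^p)/∂s_h = (∂(A(s)^p)/∂s_k) · A(s)^{k−h} as matrices with entries in ℂ[s_1,…,s_k]. -/
open Matrix MvPolynomial

noncomputable section

/-- The polynomial ring `ℂ[s_1, …, s_k]` realized as `MvPolynomial (Fin k) ℂ`:
the variable of index `i` is `s_{i+1}`. -/
abbrev SRing (k : ℕ) : Type := MvPolynomial (Fin k) ℂ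

/-- The companion matrix `A(s)` of `P_s(z) = Σ_{h=0}^{k} (−1)^h s_h z^{k−h}` (with `s_0 = 1`),
with entries in `ℂ[s_1, …, s_k]`: `A(s)_{i,i+1} = 1` for `1 ≤ i ≤ k−1` and the last row is
`((−1)^{k−1} s_k, …, s_1)`. -/
def LA (k : ℕ) : Matrix (Fin k) (Fin k) (SRing k) := fun i j =>
  if (i : ℕ) = k - 1 then
    (-1 : SRing k) ^ (k - 1 - (j : ℕ)) *
      MvPolynomial.X (⟨k - 1 - (j : ℕ), by have := j.isLt; omega⟩ : Fin k)
  else if (j : ℕ) = (i : ℕ) + 1 then 1 else 0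

/-!
`∂A/∂s_h` is the single matrix unit `(−1)^{h−1} E_{k,k−h+1}` in the last row, and right
multiplication by `A` moves a matrix unit of the last row one column to the right. Hence
`(−1)^{k−h} ∂A/∂s_h = (∂A/∂s_k) A^{k−h}`, the case `p = 1`. Since `A^{k−h}` commutes with `A`,
the Leibniz rule propagates this identity from `A` to all its powers.
-/

namespace Matrix

variable {l m n R A : Type*} [CommSemiring R] [CommSemiring A] [Algebra R A]

theorem map_derivation_mul [Fintype m] (D : Derivation R A A) (M : Matrix l m A)
    (N : Matrix m n A) : (M * N).map D = M.map D * N + M * N.map D := by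
  ext i j
  simp only [map_apply, mul_apply, add_apply, map_sum, Derivation.leibniz, smul_eq_mul,
    Finset.sum_add_distrib]
  rw [add_comm]
  simp only [mul_comm (N _ j)]

theorem map_derivation_one [DecidableEq n] (D : Derivation R A A) :
    (1 : Matrix n n A).map D = 0 := by
  ext i j
  by_cases hij : i = j <;> simp [hij]

theorem smul_map_derivation_pow [Fintype n] [DecidableEq n] (D D' : Derivation R A A)
    {M B : Matrix n n A} (c : A) (hMB : Commute M B) (hM : c • M.map D = M.map D' * B)
    (p : ℕ) : c • (M ^ p).map D = (M ^ p).map D' * B := by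
  induction p with
  | zero => simp [map_derivation_one]
  | succ p ih =>
    calc c • (M ^ (p + 1)).map D
        = (c • (M ^ p).map D) * M + M ^ p * (c • M.map D) := by
          rw [pow_succ, map_derivation_mul, smul_add, smul_mul_assoc, mul_smul_comm]
      _ = (M ^ p).map D' * B * M + M ^ p * M.map D' * B := by
          rw [ih, hM, Matrix.mul_assoc (M ^ p)]
      _ = (M ^ (p + 1)).map D' * B := by
          rw [Matrix.mul_assoc _ B, ← hMB.eq, ← Matrix.mul_assoc, ← add_mul,
            ← map_derivation_mul, ← pow_succ]

end Matrix

section Companion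

variable {n : ℕ}

theorem LA_last_apply (j : Fin (n + 1)) :
    LA (n + 1) (Fin.last n) j = (-1) ^ (j.rev : ℕ) * X j.rev := by
  have hrev : (j.rev : ℕ) = n + 1 - 1 - j := by simp [Fin.val_rev]
  simp only [LA, Fin.val_last, add_tsub_cancel_right, if_true]
  congr 2
  · simp [Fin.val_rev]
  · exact Fin.ext hrev.symm

theorem LA_castSucc_apply (i : Fin n) (j : Fin (n + 1)) :
    LA (n + 1) i.castSucc j = if (j : ℕ) = i + 1 then 1 else 0 := by
  simp [LA, i.isLt.ne]

theorem single_mul_LA (i : Fin (n + 1)) (j : Fin n) (c : SRing (n + 1)) :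
    single i j.castSucc c * LA (n + 1) = single i j.succ c := by
  ext a b : 1
  by_cases ha : a = i
  · subst ha
    by_cases hb : b = j.succ
    · simp [single_mul_apply_same, LA_castSucc_apply, hb]
    · rw [single_mul_apply_same, LA_castSucc_apply, single_apply_of_col_ne _ _ (Ne.symm hb),
        if_neg (show (b : ℕ) ≠ j + 1 from fun h => hb (Fin.ext h)), mul_zero]
  · rw [single_mul_apply_of_ne (h := ha), single_apply_of_row_ne (Ne.symm ha)]

theorem single_zero_mul_LA_pow (i : Fin (n + 1)) (c : SRing (n + 1)) {m : ℕ} (hm : m ≤ n) :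
    single i 0 c * LA (n + 1) ^ m = single i ⟨m, Nat.lt_succ_of_le hm⟩ c := by
  induction m with
  | zero => simp
  | succ m ih =>
    rw [pow_succ, ← Matrix.mul_assoc, ih (by omega)]
    exact single_mul_LA i ⟨m, hm⟩ c

theorem map_pderiv_LA (v : Fin (n + 1)) :
    (LA (n + 1)).map (pderiv v) = single (Fin.last n) v.rev ((-1) ^ (v : ℕ)) := by
  ext i j : 1
  rcases Fin.eq_castSucc_or_eq_last i with ⟨i, rfl⟩ | rfl
  · rw [single_apply_of_row_ne (Fin.castSucc_lt_last i).ne']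
    simp [LA_castSucc_apply, apply_ite (pderiv v)]
  · rw [map_apply, LA_last_apply]
    by_cases hj : j = v.rev
    · subst hj
      simp
    · rw [single_apply_of_col_ne _ _ (Ne.symm hj)]
      simp [pderiv_X, Fin.rev_eq_iff, hj]

theorem smul_map_pderiv_LA (v : Fin (n + 1)) :
    (-1 : SRing (n + 1)) ^ (n - v : ℕ) • (LA (n + 1)).map (pderiv v)
      = (LA (n + 1)).map (pderiv (Fin.last n)) * LA (n + 1) ^ (n - v : ℕ) := by
  have hrev : v.rev = ⟨n - v, by omega⟩ := Fin.ext (by simp [Fin.val_rev])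
  rw [map_pderiv_LA, map_pderiv_LA, Fin.rev_last, single_zero_mul_LA_pow _ _ (Nat.sub_le n v),
    smul_single, smul_eq_mul, ← pow_add, Nat.sub_add_cancel v.is_le, Fin.val_last, hrev]

end Companion

/-- `(−1)^{k−h} ∂(A(s)^p)/∂s_h = (∂(A(s)^p)/∂s_k) · A(s)^{k−h}`
for all `h ∈ {1, …, k}` and all `p ∈ ℕ`, as matrices over `ℂ[s_1, …, s_k]`. -/
theorem companion_pow_pderiv_identity
    (k : ℕ) (h : ℕ) (h1 : 1 ≤ h) (h2 : h ≤ k) (p : ℕ) :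
    ((-1 : SRing k) ^ (k - h)) •
        (LA k ^ p).map (fun q => MvPolynomial.pderiv (⟨h - 1, by omega⟩ : Fin k) q)
      = ((LA k ^ p).map (fun q => MvPolynomial.pderiv (⟨k - 1, by omega⟩ : Fin k) q))
          * LA k ^ (k - h) := by
  obtain ⟨n, rfl⟩ : ∃ n, k = n + 1 := ⟨k - 1, by omega⟩
  have hlast : (⟨n + 1 - 1, by omega⟩ : Fin (n + 1)) = Fin.last n := Fin.ext (by simp)
  have hexp : n + 1 - h = n - ((⟨h - 1, by omega⟩ : Fin (n + 1)) : ℕ) := by simp only; omega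
  rw [hlast, hexp]
  exact smul_map_derivation_pow _ _ _ ((Commute.refl _).pow_right _) (smul_map_pderiv_LA _) p
end
end

section
/- For every p ≥ 1 the identity ∇A(s)^p − A(s)^p∇ + pA(s)^{p−1} = (−1)^{k−1} (∂(A(s)^p)/∂s_k) · P'_s(A(s)) holds as matrices with entries in ℂ[s_1,…,s_k]. -/
open Matrix MvPolynomial

noncomputable section

/-- The constant matrix `∇` with `∇_{i+1,i} = i` for `i = 1, …, k−1` and `0` elsewhere. -/
def Lnabla (k : ℕ) : Matrix (Fin k) (Fin k) (SRing k) := fun i j =>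
  if (i : ℕ) = (j : ℕ) + 1 then ((i : ℕ) : SRing k) else 0

/-- `P'_s(A(s)) = Σ_{h=0}^{k−1} (−1)^h (k−h) s_h A(s)^{k−h−1}` (with `s_0 = 1`). -/
def LPprimeA (k : ℕ) : Matrix (Fin k) (Fin k) (SRing k) :=
  (k : SRing k) • LA k ^ (k - 1) + ∑ i : Fin k,
    ((-1 : SRing k) ^ ((i : ℕ) + 1) * ((k - 1 - (i : ℕ) : ℕ) : SRing k) *
      MvPolynomial.X i) • LA k ^ (k - 2 - (i : ℕ))

/-!
Write `δ X = ∇X − X∇` and `D` for the entrywise derivative `∂/∂s_k`; both satisfy the Leibniz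
rule on matrices. Since `A` commutes with `P'_s(A)`, the identity for `A^{p+1}` follows from the
ones for `A^p` and `A` via
`δ(A^{p+1}) + (p+1)A^p = (δ(A^p) + pA^{p−1}) A + A^p (δ(A) + 1)`,
so everything reduces to `p = 1`. There `∇A` is diagonal, `∂A/∂s_k = (−1)^{k−1} E_{k,1}` and the
first row of `A^m` (`m < k`) is the `m`-th unit row, so both sides vanish off the last row, and
the last row of the right-hand side is the first row of `P'_s(A)`, read off from the coefficients
of `P'_s`.
-/

theorem commutator_pow_add_nsmul_of_leibniz {R : Type*} [Ring R] (D : R → R)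
    (hD : ∀ x y, D (x * y) = D x * y + x * D y) {N A B : R} (hAB : Commute A B)
    (h : N * A - A * N + 1 = D A * B) (p : ℕ) :
    N * A ^ p - A ^ p * N + p • A ^ (p - 1) = D (A ^ p) * B := by
  induction p with
  | zero =>
    have hD1 : D 1 = 0 := by simpa using hD 1 1
    simp [hD1]
  | succ p ih =>
    have hpred : p • A ^ (p - 1) * A = p • A ^ p := by
      rcases p with _ | p
      · simp
      · rw [smul_mul_assoc, ← pow_succ, Nat.add_sub_cancel]
    calc N * A ^ (p + 1) - A ^ (p + 1) * N + (p + 1) • A ^ (p + 1 - 1)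
        = (N * A ^ p - A ^ p * N + p • A ^ (p - 1)) * A + A ^ p * (N * A - A * N + 1) := by
          simp only [add_mul, sub_mul, mul_add, mul_sub, hpred, pow_succ, mul_assoc, add_smul,
            one_smul, Nat.add_sub_cancel, mul_one]
          abel
      _ = (D (A ^ p) * A + A ^ p * D A) * B := by
          rw [ih, h, mul_assoc, ← hAB.eq]
          simp only [add_mul, mul_assoc]
      _ = D (A ^ (p + 1)) * B := by rw [pow_succ, hD]

theorem Matrix.map_derivation_mul_s12 {R S l m n : Type*} [CommSemiring R] [CommSemiring S]
    [Algebra R S] [Fintype m] (d : Derivation R S S) (M : Matrix l m S) (N : Matrix m n S) :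
    (M * N).map d = M.map d * N + M * N.map d := by
  ext i j
  simp only [map_apply, add_apply, mul_apply, map_sum, ← Finset.sum_add_distrib]
  exact Finset.sum_congr rfl fun l _ => by rw [Derivation.leibniz, smul_eq_mul, smul_eq_mul]; ring

section

variable {k : ℕ}

theorem LA_apply_of_ne_last {i : Fin k} (hi : (i : ℕ) ≠ k - 1) (j : Fin k) :
    LA k i j = if (j : ℕ) = i + 1 then 1 else 0 :=
  if_neg hi

theorem LA_apply_last (hk : 0 < k) (j : Fin k) :
    LA k ⟨k - 1, by omega⟩ j = (-1) ^ (k - 1 - j) * X ⟨k - 1 - j, by omega⟩ :=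
  if_pos rfl

theorem Lnabla_mul_apply (M : Matrix (Fin k) (Fin k) (SRing k)) (i j : Fin k) :
    (Lnabla k * M) i j = if h : (i : ℕ) = 0 then 0 else (i : SRing k) * M ⟨i - 1, by omega⟩ j := by
  split_ifs with hi
  · rw [mul_apply]
    exact Finset.sum_eq_zero fun l _ => by simp [Lnabla, hi]
  · rw [mul_apply, Fintype.sum_eq_single ⟨i - 1, by omega⟩ fun l hl => ?_]
    · rw [Lnabla, if_pos (by simp; omega)]
    · have : (i : ℕ) ≠ l + 1 := fun h => hl (Fin.ext (by simp; omega))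
      simp [Lnabla, this]

theorem mul_Lnabla_apply (M : Matrix (Fin k) (Fin k) (SRing k)) (i j : Fin k) :
    (M * Lnabla k) i j = if h : (j : ℕ) + 1 < k then M i ⟨j + 1, h⟩ * ((j + 1 : ℕ) : SRing k)
      else 0 := by
  split_ifs with hj
  · rw [mul_apply, Fintype.sum_eq_single ⟨j + 1, hj⟩ fun l hl => ?_]
    · simp [Lnabla]
    · have : (l : ℕ) ≠ j + 1 := fun h => hl (Fin.ext h)
      simp [Lnabla, this]
  · rw [mul_apply]
    refine Finset.sum_eq_zero fun l _ => ?_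
    have : (l : ℕ) ≠ j + 1 := by omega
    simp [Lnabla, this]

theorem Lnabla_mul_LA : Lnabla k * LA k = diagonal fun i : Fin k => ((i : ℕ) : SRing k) := by
  refine Matrix.ext fun i j => ?_
  rw [Lnabla_mul_apply, diagonal_apply]
  split_ifs with h0 hij hij
  · simp [h0]
  · rfl
  · rw [LA_apply_of_ne_last (by simp; omega), if_pos (by simp [← hij]; omega), mul_one, hij]
  · rw [LA_apply_of_ne_last (by simp; omega),
      if_neg fun h => hij (Fin.ext (by simp at h; omega)), mul_zero]

theorem LA_pow_apply_zero (hk : 0 < k) {m : ℕ} (hm : m < k) (j : Fin k) :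
    (LA k ^ m) ⟨0, hk⟩ j = if (j : ℕ) = m then 1 else 0 := by
  induction m generalizing j with
  | zero => simp [one_apply, Fin.ext_iff, eq_comm]
  | succ m ih =>
    rw [pow_succ, mul_apply, Fintype.sum_eq_single ⟨m, by omega⟩ fun l hl => ?_]
    · rw [ih (by omega), if_pos rfl, one_mul, LA_apply_of_ne_last (by simp; omega)]
    · rw [ih (by omega), if_neg (fun h => hl (Fin.ext h)), zero_mul]

theorem LPprimeA_apply_zero (hk : 2 ≤ k) (j : Fin k) :
    LPprimeA k ⟨0, by omega⟩ j =
      if (j : ℕ) = k - 1 then (k : SRing k)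
      else (-1 : SRing k) ^ (k - 1 - j) * ((j + 1 : ℕ) : SRing k) * X ⟨k - 2 - j, by omega⟩ := by
  have hrow (c : SRing k) (m : ℕ) (hm : m < k) : (c • LA k ^ m) ⟨0, by omega⟩ j =
      if (j : ℕ) = m then c else 0 := by
    rw [Matrix.smul_apply, LA_pow_apply_zero _ hm, smul_eq_mul, mul_ite, mul_one, mul_zero]
  rw [LPprimeA, Matrix.add_apply, Matrix.sum_apply, hrow _ _ (by omega)]
  split_ifs with hj
  · refine (add_eq_left.mpr <| Finset.sum_eq_zero fun b _ => ?_)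
    rw [hrow _ _ (by omega), if_neg (by omega)]
  · rw [zero_add, Fintype.sum_eq_single ⟨k - 2 - j, by omega⟩ fun b hb => ?_]
    · rw [hrow _ _ (by omega), if_pos (by simp; omega)]
      simp only [show k - 1 - (k - 2 - j) = j + 1 by omega, show k - 2 - j + 1 = k - 1 - j by omega]
    -- for `b = k - 1` the truncated exponent `k - 2 - b` also hits column `0`, with coefficient `0`
    · have hb' : (b : ℕ) ≠ k - 2 - j := fun h => hb (Fin.ext h)
      rw [hrow _ _ (by omega)]
      split_ifs with h
      · rw [show k - 1 - (b : ℕ) = 0 by omega, Nat.cast_zero, mul_zero, zero_mul]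
      · rfl

theorem map_pderiv_LA_s12 (hk : 0 < k) :
    (LA k).map (pderiv ⟨k - 1, by omega⟩) = single ⟨k - 1, by omega⟩ ⟨0, hk⟩ ((-1) ^ (k - 1)) := by
  refine Matrix.ext fun i j => ?_
  by_cases hi : (i : ℕ) = k - 1
  · have hC : pderiv ⟨k - 1, by omega⟩ ((-1 : SRing k) ^ (k - 1 - j)) = 0 := by
      simp [Derivation.leibniz_pow]
    rw [map_apply, LA, if_pos hi, Derivation.leibniz, hC, smul_zero, add_zero, pderiv_X,
      smul_eq_mul, single_apply, Pi.single_apply]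
    by_cases hj : (j : ℕ) = 0
    · rw [if_pos (Fin.ext (by simp [hj])), if_pos ⟨Fin.ext hi.symm, Fin.ext hj.symm⟩, hj, mul_one,
        Nat.sub_zero]
    · rw [if_neg (fun h => hj (by simp [Fin.ext_iff] at h; omega)), if_neg (fun h => hj (by
        simp [← h.2])), mul_zero]
  · simp only [map_apply, LA_apply_of_ne_last hi, single_apply, Fin.ext_iff]
    split_ifs <;> simp_all

theorem commute_LA_LPprimeA : Commute (LA k) (LPprimeA k) :=
  ((Commute.self_pow _ _).smul_right _).add_right <|
    Commute.sum_right _ _ _ fun _ _ => (Commute.self_pow _ _).smul_right _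

theorem Lnabla_mul_LA_sub_LA_mul_Lnabla_add_one (hk : 2 ≤ k) :
    Lnabla k * LA k - LA k * Lnabla k + 1 =
      (LA k).map (pderiv ⟨k - 1, Nat.sub_one_lt_of_lt hk⟩) *
        ((-1 : SRing k) ^ (k - 1) • LPprimeA k) := by
  rw [map_pderiv_LA_s12 (by omega), Lnabla_mul_LA]
  refine Matrix.ext fun i j => ?_
  rw [Matrix.add_apply, Matrix.sub_apply, diagonal_apply, one_apply, mul_Lnabla_apply]
  by_cases hi : (i : ℕ) = k - 1
  · rw [show i = ⟨k - 1, by omega⟩ from Fin.ext hi, single_mul_apply_same, Matrix.smul_apply,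
      smul_eq_mul, ← mul_assoc, ← pow_add, Even.neg_one_pow ⟨_, rfl⟩, one_mul,
      LPprimeA_apply_zero hk]
    by_cases hj : (j : ℕ) = k - 1
    · rw [show j = ⟨k - 1, by omega⟩ from Fin.ext hj]
      simp only [if_pos, dif_neg (show ¬(k - 1 + 1 < k) by omega), sub_zero]
      exact_mod_cast (by omega : k - 1 + 1 = k)
    · have hji : (⟨k - 1, by omega⟩ : Fin k) ≠ j := fun h => hj (by rw [← h])
      rw [if_neg hj, if_neg hji, if_neg hji, dif_pos (by omega), LA_apply_last (by omega)]
      simp only [show k - 1 - (j + 1) = k - 2 - j by omega, show k - 1 - j = k - 2 - j + 1 by omega,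
        pow_succ]
      ring
  · rw [single_mul_apply_of_ne _ _ _ _ _ fun h => hi (by rw [h])]
    rcases eq_or_ne i j with rfl | hij
    · rw [if_pos rfl, if_pos rfl, dif_pos (by omega), LA_apply_of_ne_last hi, if_pos rfl]
      push_cast
      ring
    · have : (j : ℕ) ≠ i := Fin.val_ne_of_ne hij.symm
      rw [if_neg hij, if_neg hij]
      split_ifs <;> simp [LA_apply_of_ne_last hi, this]

end

/-- `∇A(s)^p − A(s)^p∇ + pA(s)^{p−1} = (−1)^{k−1} (∂(A(s)^p)/∂s_k)·P'_s(A(s))`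
for every `p ≥ 1`, as matrices over `ℂ[s_1, …, s_k]`. -/
theorem nabla_companion_commutator_identity
    (k : ℕ) (hk : 2 ≤ k) (p : ℕ) :
    Lnabla k * LA k ^ p - LA k ^ p * Lnabla k + (p : SRing k) • LA k ^ (p - 1)
      = ((-1 : SRing k) ^ (k - 1)) •
          (((LA k ^ p).map (fun q => MvPolynomial.pderiv (⟨k - 1, by omega⟩ : Fin k) q))
            * LPprimeA k) := by
  rw [← mul_smul_comm, Nat.cast_smul_eq_nsmul]
  exact commutator_pow_add_nsmul_of_leibniz (N := Lnabla k)
    (fun M : Matrix (Fin k) (Fin k) (SRing k) => M.map (pderiv (⟨k - 1, by omega⟩ : Fin k)))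
    (Matrix.map_derivation_mul_s12 _) (commute_LA_LPprimeA.smul_right _)
    (Lnabla_mul_LA_sub_LA_mul_Lnabla_add_one hk) p
end
end
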